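/- Let W' = {(x₁,...,x₉,x₀) ∈ ℂ¹⁰ : x₁ + x₇ + x₈ = 0, x₆ + x₉ + x₀ = 0, x₅ + x₈ + x₀ = 0, x₂ + x₇ + x₉ = 0, x₄ + x₅ + x₇ + x₈ = 0, x₃ + x₆ + x₈ + x₀ = 0}, and let Π₁ = {x₁ = x₂ = x₃ = x₄ = x₅ = x₆ = 0}, Π₂ = {x₁ = x₂ = x₃ = x₇ = x₈ = x₉ = 0}, Π₃ = {x₀ = x₁ = x₄ = x₅ = x₇ = x₈ = 0}, Π₄ = {x₀ = x₂ = x₄ = x₆ = x₇ = x₉ = 0}, Π₅ = {x₀ = x₃ = x₅ = x₆ = x₈ = x₉ = 0} be coordinate subspaces of ℂ¹⁰. Then W' has dimension 4, and for each i = 1, ..., 5 the intersection W' ∩ Πᵢ is a one-dimensional subspace of ℂ¹⁰. -/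

import Mathlib

/-- Coordinates on `ℂ¹⁰` are ordered `(x₁, …, x₉, x₀)`, i.e. index `i < 9` corresponds to
`x_{i+1}` and index `9` corresponds to `x₀`.  `zeroIndicesP3 i` is the set of coordinates
that vanish on the coordinate subspace `Π_{i+1}`:
`Π₁ = {x₁ = ⋯ = x₆ = 0}`, `Π₂ = {x₁ = x₂ = x₃ = x₇ = x₈ = x₉ = 0}`,
`Π₃ = {x₀ = x₁ = x₄ = x₅ = x₇ = x₈ = 0}`, `Π₄ = {x₀ = x₂ = x₄ = x₆ = x₇ = x₉ = 0}`,
`Π₅ = {x₀ = x₃ = x₅ = x₆ = x₈ = x₉ = 0}`. -/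
def zeroIndicesP3 : Fin 5 → Set (Fin 10) :=
  ![{0, 1, 2, 3, 4, 5}, {0, 1, 2, 6, 7, 8}, {0, 3, 4, 6, 7, 9},
    {1, 3, 5, 6, 8, 9}, {2, 4, 5, 7, 8, 9}]

/-!
The six equations of `W'` solve uniquely for `x₁, …, x₆` in terms of the pivot coordinates
`(x₇, x₈, x₉, x₀)`, so restriction to the pivots is an isomorphism `W' ≃ ℂ⁴`; its inverse
sends the standard basis to vectors `v₀, …, v₃`. These span `W' ∩ Π₅, …, W' ∩ Π₂`, and
`v₀ - v₁ - v₂ + v₃` spans `W' ∩ Π₁`: five points in general position in `ℙ(W') ≅ ℙ³`.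
Each intersection is a line because on `W' ∩ Πᵢ` the vanishing of a single pivot coordinate
forces all four to vanish.
-/

theorem Submodule.finrank_eq_card_of_pivots {K ι κ : Type*} [Field K] [Fintype κ]
    [DecidableEq κ] (W : Submodule K (ι → K)) (c : κ → ι) (v : κ → ι → K)
    (hv : ∀ k, v k ∈ W) (hvc : ∀ k l, v k (c l) = if k = l then 1 else 0)
    (hc : ∀ x ∈ W, x ∘ c = 0 → x = 0) :
    Module.finrank K W = Fintype.card κ := by
  let π : W →ₗ[K] κ → K := (LinearMap.funLeft K K c).comp W.subtype
  have hinj : Function.Injective π := by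
    rw [← LinearMap.ker_eq_bot, LinearMap.ker_eq_bot']
    exact fun x hx => Subtype.ext (hc x x.2 hx)
  have hsurj : Function.Surjective π := fun y => by
    refine ⟨⟨∑ k, y k • v k, W.sum_mem fun k _ => W.smul_mem _ (hv k)⟩, funext fun l => ?_⟩
    simp [π, LinearMap.funLeft, hvc]
  rw [(LinearEquiv.ofBijective π ⟨hinj, hsurj⟩).finrank_eq, Module.finrank_fintype_fun_eq_card]

theorem Submodule.finrank_eq_one_of_pivot {K ι : Type*} [Field K]
    (W : Submodule K (ι → K)) (j : ι) (u : ι → K) (hu : u ∈ W) (huj : u j = 1)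
    (hj : ∀ x ∈ W, x j = 0 → x = 0) : Module.finrank K W = 1 :=
  W.finrank_eq_card_of_pivots (fun _ : Unit => j) (fun _ => u) (fun _ => hu) (by simp [huj])
    fun x hx hxj => hj x hx (congrFun hxj ())

def AltPlaneEqs (x : Fin 10 → ℂ) : Prop :=
  x 0 + x 6 + x 7 = 0 ∧ x 5 + x 8 + x 9 = 0 ∧ x 4 + x 7 + x 9 = 0 ∧
    x 1 + x 6 + x 8 = 0 ∧ x 3 + x 4 + x 6 + x 7 = 0 ∧ x 2 + x 5 + x 7 + x 9 = 0

def altPlanePivots : Fin 4 → Fin 10 := ![6, 7, 8, 9]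

def altPlaneBasis : Fin 4 → Fin 10 → ℂ :=
  ![![-1, -1, 0, -1, 0, 0, 1, 0, 0, 0],
    ![-1, 0, -1, 0, -1, 0, 0, 1, 0, 0],
    ![0, -1, 1, 0, 0, -1, 0, 0, 1, 0],
    ![0, 0, 0, 1, -1, -1, 0, 0, 0, 1]]

theorem altPlaneEqs_altPlaneBasis (k : Fin 4) : AltPlaneEqs (altPlaneBasis k) := by
  fin_cases k <;> simp [AltPlaneEqs, altPlaneBasis]

theorem altPlaneBasis_apply_altPlanePivots (k l : Fin 4) :
    altPlaneBasis k (altPlanePivots l) = if k = l then 1 else 0 := by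
  fin_cases k <;> fin_cases l <;> rfl

theorem eq_zero_of_altPlaneEqs {x : Fin 10 → ℂ} (hx : AltPlaneEqs x)
    (hpiv : x 6 = 0 ∧ x 7 = 0 ∧ x 8 = 0 ∧ x 9 = 0) : x = 0 := by
  obtain ⟨h₁, h₂, h₃, h₄, h₅, h₆⟩ := hx
  funext l
  fin_cases l <;> simp only [Fin.zero_eta, Fin.mk_one, Fin.reduceFinMk, Pi.zero_apply] <;> grind

def altPlaneMeet : Fin 5 → Fin 10 → ℂ :=
  ![altPlaneBasis 0 - altPlaneBasis 1 - altPlaneBasis 2 + altPlaneBasis 3,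
    altPlaneBasis 3, altPlaneBasis 2, altPlaneBasis 1, altPlaneBasis 0]

def altPlaneMeetPivot : Fin 5 → Fin 10 := ![6, 9, 8, 7, 6]

theorem altPlaneEqs_altPlaneMeet (i : Fin 5) : AltPlaneEqs (altPlaneMeet i) := by
  fin_cases i <;> simp [AltPlaneEqs, altPlaneMeet, altPlaneBasis]

theorem altPlaneMeet_apply_zeroIndicesP3 (i : Fin 5) :
    ∀ j ∈ zeroIndicesP3 i, altPlaneMeet i j = 0 := by
  fin_cases i <;> simp [zeroIndicesP3, altPlaneMeet, altPlaneBasis]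

theorem altPlaneMeet_apply_altPlaneMeetPivot (i : Fin 5) :
    altPlaneMeet i (altPlaneMeetPivot i) = 1 := by
  fin_cases i <;> simp [altPlaneMeet, altPlaneMeetPivot, altPlaneBasis]

theorem altPlanePivots_eq_zero {x : Fin 10 → ℂ} (hx : AltPlaneEqs x) (i : Fin 5)
    (hz : ∀ j ∈ zeroIndicesP3 i, x j = 0) (hpiv : x (altPlaneMeetPivot i) = 0) :
    x 6 = 0 ∧ x 7 = 0 ∧ x 8 = 0 ∧ x 9 = 0 := by
  obtain ⟨h₁, h₂, h₃, h₄, h₅, h₆⟩ := hx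
  fin_cases i <;>
    simp only [zeroIndicesP3, altPlaneMeetPivot, Fin.isValue, Fin.zero_eta, Fin.mk_one,
      Fin.reduceFinMk, Matrix.cons_val, Set.mem_insert_iff, Set.mem_singleton_iff,
      forall_eq_or_imp, forall_eq] at hz hpiv <;>
    grind

/-- The alternative subspace
`W' = {x ∈ ℂ¹⁰ : x₁ + x₇ + x₈ = 0, x₆ + x₉ + x₀ = 0, x₅ + x₈ + x₀ = 0, x₂ + x₇ + x₉ = 0,
x₄ + x₅ + x₇ + x₈ = 0, x₃ + x₆ + x₈ + x₀ = 0}` has dimension 4, and it meets each of the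
coordinate subspaces `Π₁, …, Π₅` in a one-dimensional subspace. -/
theorem alternative_plane_dim_and_intersections
    (W' : Submodule ℂ (Fin 10 → ℂ))
    (hW' : ∀ x : Fin 10 → ℂ, x ∈ W' ↔
      x 0 + x 6 + x 7 = 0 ∧ x 5 + x 8 + x 9 = 0 ∧ x 4 + x 7 + x 9 = 0 ∧
      x 1 + x 6 + x 8 = 0 ∧ x 3 + x 4 + x 6 + x 7 = 0 ∧ x 2 + x 5 + x 7 + x 9 = 0)
    (P : Fin 5 → Submodule ℂ (Fin 10 → ℂ))
    (hP : ∀ i, ∀ x : Fin 10 → ℂ, x ∈ P i ↔ ∀ j ∈ zeroIndicesP3 i, x j = 0) :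
    Module.finrank ℂ W' = 4 ∧
    ∀ i, Module.finrank ℂ (W' ⊓ P i : Submodule ℂ (Fin 10 → ℂ)) = 1 := by
  have hW'eqs (x : Fin 10 → ℂ) : x ∈ W' ↔ AltPlaneEqs x := hW' x
  refine ⟨W'.finrank_eq_card_of_pivots altPlanePivots altPlaneBasis
      (fun k => (hW'eqs _).2 (altPlaneEqs_altPlaneBasis k)) altPlaneBasis_apply_altPlanePivots
      fun x hx hpiv => eq_zero_of_altPlaneEqs ((hW'eqs x).1 hx)
        ⟨congrFun hpiv 0, congrFun hpiv 1, congrFun hpiv 2, congrFun hpiv 3⟩, fun i => ?_⟩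
  refine (W' ⊓ P i).finrank_eq_one_of_pivot (altPlaneMeetPivot i) (altPlaneMeet i)
    ⟨(hW'eqs _).2 (altPlaneEqs_altPlaneMeet i), (hP i _).2 (altPlaneMeet_apply_zeroIndicesP3 i)⟩
    (altPlaneMeet_apply_altPlaneMeetPivot i) ?_
  rintro x ⟨hxW, hxP⟩ hpiv
  have hx := (hW'eqs x).1 hxW
  exact eq_zero_of_altPlaneEqs hx (altPlanePivots_eq_zero hx i ((hP i x).1 hxP) hpiv)
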